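/- arXiv:2007.02717 — 2 statements merged into one kernel-verified Lean document; each statement's English description precedes it below -/
import Mathlib

section
/- Let A₁, A₂ be Hermitian dA×dA complex matrices, B₁, B₂ be Hermitian dB×dB complex matrices, and let k₁, k₂ be nonzero real numbers. Suppose λ ≠ 0 is an eigenvalue of K = k₁·(A₁ ⊗ B₁) + k₂·(A₂ ⊗ B₂) and that α ⊗ β is an eigenvector of K for λ, where α ∈ ℂ^{dA} and β ∈ ℂ^{dB} are nonzero. Then either α is a common eigenvector of A₁ and A₂ (i.e., there exist scalars a₁, a₂ with A₁α = a₁α and A₂α = a₂α), or β is a common eigenvector of B₁ and B₂. -/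
/-!
Write `uₖ = Aₖ α` and `wₖ = Bₖ β`. The eigenvalue equation says that the rank-one matrix
`α (λ β)ᵀ` equals `(k₁ u₁) w₁ᵀ + (k₂ u₂) w₂ᵀ`. If `w₁, w₂` are linearly independent, eliminating
between the rows `i` and `i₀` (with `α i₀ ≠ 0`) forces `u₁, u₂` to be multiples of `α`. Otherwise
`w₁ = a z` and `w₂ = b z`, the sum collapses to the single outer product `(a k₁ u₁ + b k₂ u₂) zᵀ`,
and a nonzero rank-one matrix determines its column factor up to a scalar, so `z`, hence `w₁` and
`w₂`, is a multiple of `β`.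
-/

open Matrix
open scoped Kronecker

/-- The Kronecker (tensor) product of two vectors: `(α ⊗ β)(i,j) = α i * β j`. -/
def vecKron {dA dB : ℕ} (α : Fin dA → ℂ) (β : Fin dB → ℂ) : Fin dA × Fin dB → ℂ :=
  fun p => α p.1 * β p.2

open Submodule

section OuterProduct

variable {K V ι κ : Type*} [Field K]

theorem exists_eq_smul_of_not_linearIndependent_pair [AddCommGroup V] [Module K V] {y₁ y₂ : V}
    (h : ¬LinearIndependent K ![y₁, y₂]) : ∃ z : V, ∃ a b : K, y₁ = a • z ∧ y₂ = b • z := by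
  by_cases hy₁ : y₁ = 0
  · exact ⟨y₂, 0, 1, by simp [hy₁], by simp⟩
  · rw [LinearIndependent.pair_iff' hy₁] at h
    push Not at h
    obtain ⟨b, hb⟩ := h
    exact ⟨y₁, 1, b, by simp, hb.symm⟩

theorem mem_span_singleton_of_forall_mul_eq_mul {u x : ι → K} {i₀ : ι} (hx : x i₀ ≠ 0)
    (h : ∀ i, x i₀ * u i = x i * u i₀) : u ∈ K ∙ x :=
  mem_span_singleton.mpr ⟨u i₀ / x i₀, funext fun i => by
    simp only [Pi.smul_apply, smul_eq_mul]
    field_simp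
    linear_combination (h i).symm⟩

theorem mem_span_singleton_of_vecMulVec_eq {u x : ι → K} {v y : κ → K}
    (h : vecMulVec u v = vecMulVec x y) (hx : x ≠ 0) (hy : y ≠ 0) : u ∈ K ∙ x := by
  obtain ⟨j₀, hj₀⟩ := Function.ne_iff.mp hy
  obtain ⟨i₀, hi₀⟩ := Function.ne_iff.mp hx
  have hv : v j₀ ≠ 0 := fun hv => mul_ne_zero hi₀ hj₀ <| by
    simpa [vecMulVec_apply, hv] using (congrFun (congrFun h i₀) j₀).symm
  refine mem_span_singleton_of_forall_mul_eq_mul hi₀ fun i => mul_right_cancel₀ hv ?_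
  have hi := congrFun (congrFun h i) j₀
  have hrow₀ := congrFun (congrFun h i₀) j₀
  simp only [vecMulVec_apply] at hi hrow₀
  linear_combination x i₀ * hi - x i * hrow₀

theorem mem_span_singleton_of_add_vecMulVec_eq_of_linearIndependent {x₁ x₂ x : ι → K}
    {y₁ y₂ y : κ → K} (h : vecMulVec x₁ y₁ + vecMulVec x₂ y₂ = vecMulVec x y)
    (hy : LinearIndependent K ![y₁, y₂]) (hx : x ≠ 0) : x₁ ∈ K ∙ x ∧ x₂ ∈ K ∙ x := by
  obtain ⟨i₀, hi₀⟩ := Function.ne_iff.mp hx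
  have hrow : ∀ i, (x i₀ * x₁ i - x i * x₁ i₀) • y₁ + (x i₀ * x₂ i - x i * x₂ i₀) • y₂ = 0 := by
    intro i
    funext j
    have hi := congrFun (congrFun h i) j
    have hrow₀ := congrFun (congrFun h i₀) j
    simp only [Matrix.add_apply, vecMulVec_apply] at hi hrow₀
    simp only [Pi.add_apply, Pi.smul_apply, smul_eq_mul, Pi.zero_apply]
    linear_combination x i₀ * hi - x i * hrow₀
  have hcoeff i := LinearIndependent.pair_iff.mp hy _ _ (hrow i)
  exact ⟨mem_span_singleton_of_forall_mul_eq_mul hi₀ fun i => sub_eq_zero.mp (hcoeff i).1,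
    mem_span_singleton_of_forall_mul_eq_mul hi₀ fun i => sub_eq_zero.mp (hcoeff i).2⟩

theorem mem_span_singleton_or_of_add_vecMulVec_eq {x₁ x₂ x : ι → K} {y₁ y₂ y : κ → K}
    (h : vecMulVec x₁ y₁ + vecMulVec x₂ y₂ = vecMulVec x y) (hx : x ≠ 0) (hy : y ≠ 0) :
    (x₁ ∈ K ∙ x ∧ x₂ ∈ K ∙ x) ∨ (y₁ ∈ K ∙ y ∧ y₂ ∈ K ∙ y) := by
  by_cases hind : LinearIndependent K ![y₁, y₂]
  · exact .inl (mem_span_singleton_of_add_vecMulVec_eq_of_linearIndependent h hind hx)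
  obtain ⟨z, a, b, rfl, rfl⟩ := exists_eq_smul_of_not_linearIndependent_pair hind
  have hz : vecMulVec z (a • x₁ + b • x₂) = vecMulVec y x := by
    ext j i
    have hij := congrFun (congrFun h i) j
    simp only [Matrix.add_apply, vecMulVec_apply, Pi.add_apply, Pi.smul_apply, smul_eq_mul] at hij ⊢
    linear_combination hij
  have hz' := mem_span_singleton_of_vecMulVec_eq hz hy hx
  exact .inr ⟨smul_mem _ a hz', smul_mem _ b hz'⟩

end OuterProduct

theorem kronecker_mulVec_vecKron {dA dB : ℕ} (M : Matrix (Fin dA) (Fin dA) ℂ)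
    (N : Matrix (Fin dB) (Fin dB) ℂ) (α : Fin dA → ℂ) (β : Fin dB → ℂ) :
    (M ⊗ₖ N) *ᵥ vecKron α β = vecKron (M *ᵥ α) (N *ᵥ β) := by
  funext ⟨i, j⟩
  simp only [mulVec, vecKron, dotProduct, kroneckerMap_apply, Fintype.sum_prod_type,
    Finset.sum_mul_sum, mul_mul_mul_comm]

theorem stmt4_general {dA dB : ℕ}
    (A₁ A₂ : Matrix (Fin dA) (Fin dA) ℂ) (B₁ B₂ : Matrix (Fin dB) (Fin dB) ℂ)
    (k₁ k₂ : ℝ) (hk₁ : k₁ ≠ 0) (hk₂ : k₂ ≠ 0)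
    (lam : ℂ) (hlam : lam ≠ 0)
    (α : Fin dA → ℂ) (β : Fin dB → ℂ) (hα : α ≠ 0) (hβ : β ≠ 0)
    (hev : ((k₁ : ℂ) • (A₁ ⊗ₖ B₁) + (k₂ : ℂ) • (A₂ ⊗ₖ B₂)).mulVec (vecKron α β)
      = lam • vecKron α β) :
    (∃ a₁ a₂ : ℂ, A₁.mulVec α = a₁ • α ∧ A₂.mulVec α = a₂ • α) ∨
    (∃ b₁ b₂ : ℂ, B₁.mulVec β = b₁ • β ∧ B₂.mulVec β = b₂ • β) := by
  have hsplit : vecMulVec ((k₁ : ℂ) • (A₁ *ᵥ α)) (B₁ *ᵥ β)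
      + vecMulVec ((k₂ : ℂ) • (A₂ *ᵥ α)) (B₂ *ᵥ β) = vecMulVec α (lam • β) := by
    ext i j
    have := congrFun hev (i, j)
    simp only [add_mulVec, smul_mulVec, kronecker_mulVec_vecKron, vecKron, Pi.add_apply,
      Pi.smul_apply, smul_eq_mul] at this
    simp only [Matrix.add_apply, vecMulVec_apply, Pi.smul_apply, smul_eq_mul]
    linear_combination this
  have hk₁' : (k₁ : ℂ) ≠ 0 := by exact_mod_cast hk₁
  have hk₂' : (k₂ : ℂ) ≠ 0 := by exact_mod_cast hk₂
  rcases mem_span_singleton_or_of_add_vecMulVec_eq hsplit hα (smul_ne_zero hlam hβ) with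
    ⟨h₁, h₂⟩ | ⟨h₁, h₂⟩
  · rw [smul_mem_iff _ hk₁', mem_span_singleton] at h₁
    rw [smul_mem_iff _ hk₂', mem_span_singleton] at h₂
    obtain ⟨a₁, ha₁⟩ := h₁
    obtain ⟨a₂, ha₂⟩ := h₂
    exact .inl ⟨a₁, a₂, ha₁.symm, ha₂.symm⟩
  · rw [span_singleton_smul_eq (IsUnit.mk0 _ hlam), mem_span_singleton] at h₁ h₂
    obtain ⟨b₁, hb₁⟩ := h₁
    obtain ⟨b₂, hb₂⟩ := h₂
    exact .inr ⟨b₁, b₂, hb₁.symm, hb₂.symm⟩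

/-- If `λ ≠ 0` is an eigenvalue of `K = k₁ A₁⊗B₁ + k₂ A₂⊗B₂`
(`k₁, k₂` nonzero reals) with product eigenvector `α ⊗ β`, then `α` is a common eigenvector
of `A₁, A₂` or `β` is a common eigenvector of `B₁, B₂`. -/
theorem stmt4 {dA dB : ℕ}
    (A₁ A₂ : Matrix (Fin dA) (Fin dA) ℂ) (B₁ B₂ : Matrix (Fin dB) (Fin dB) ℂ)
    (hA₁ : A₁.IsHermitian) (hA₂ : A₂.IsHermitian)
    (hB₁ : B₁.IsHermitian) (hB₂ : B₂.IsHermitian)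
    (k₁ k₂ : ℝ) (hk₁ : k₁ ≠ 0) (hk₂ : k₂ ≠ 0)
    (lam : ℂ) (hlam : lam ≠ 0)
    (α : Fin dA → ℂ) (β : Fin dB → ℂ) (hα : α ≠ 0) (hβ : β ≠ 0)
    (hev : ((k₁ : ℂ) • (A₁ ⊗ₖ B₁) + (k₂ : ℂ) • (A₂ ⊗ₖ B₂)).mulVec (vecKron α β)
      = lam • vecKron α β) :
    (∃ a₁ a₂ : ℂ, A₁.mulVec α = a₁ • α ∧ A₂.mulVec α = a₂ • α) ∨
    (∃ b₁ b₂ : ℂ, B₁.mulVec β = b₁ • β ∧ B₂.mulVec β = b₂ • β) :=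
  stmt4_general A₁ A₂ B₁ B₂ k₁ k₂ hk₁ hk₂ lam hlam α β hα hβ hev
end

section
/- Let H be a Hermitian matrix acting on ℂ^{dA·dB} ≅ ℂ^{dA} ⊗ ℂ^{dB} with dA, dB ≥ 1. If no product unit vector v satisfies Hv = λ_min(H)·v, then λ_min(H) < λ⊗_min(H), i.e., the minimum eigenvalue of H is strictly smaller than the infimum of ⟨v, Hv⟩ over product unit vectors v. -/
open Matrix

/-- The minimum (real) eigenvalue of a matrix. For a Hermitian matrix this is the least
eigenvalue. -/
noncomputable def minEig {n : Type*} [Fintype n] (K : Matrix n n ℂ) : ℝ :=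
  sInf {μ : ℝ | ∃ v : n → ℂ, v ≠ 0 ∧ K.mulVec v = (μ : ℂ) • v}

/-- `λ⊗_min(K)`: the infimum of `⟨v, Kv⟩` over product unit vectors `v`. -/
noncomputable def prodMin {dA dB : ℕ} (K : Matrix (Fin dA × Fin dB) (Fin dA × Fin dB) ℂ) : ℝ :=
  sInf {r : ℝ | ∃ (α : Fin dA → ℂ) (β : Fin dB → ℂ),
    star (vecKron α β) ⬝ᵥ vecKron α β = 1 ∧
    (star (vecKron α β) ⬝ᵥ K.mulVec (vecKron α β)).re = r}

/-!
`H - λ_min • 1` is positive semidefinite, so `⟨v, Hv⟩ ≥ λ_min` for every unit vector `v`, with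
equality only if `(H - λ_min • 1) v = 0`. Rescaling the factors, every product unit vector is
`α ⊗ β` with `‖α‖ = ‖β‖ = 1`, so `λ⊗_min` is a minimum over the compact product of two unit
spheres and is attained at some product unit vector; as that vector is not a `λ_min`-eigenvector,
the inequality is strict there.
-/

open scoped ComplexOrder

namespace Matrix

variable {n : Type*} [Fintype n] [DecidableEq n] {A : Matrix n n ℂ}

theorem setOf_eigenvalue_eq_spectrum :
    {μ : ℝ | ∃ v : n → ℂ, v ≠ 0 ∧ A *ᵥ v = (μ : ℂ) • v} = spectrum ℝ A := by
  ext μ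
  rw [Set.mem_ofPred_eq, ← spectrum.algebraMap_mem_iff ℂ, ← spectrum_toLin',
    ← Module.End.hasEigenvalue_iff_mem_spectrum, Module.End.hasEigenvalue_iff,
    Submodule.ne_bot_iff]
  simp [and_comm]

open scoped MatrixOrder in
theorem IsHermitian.posSemidef_sub_minEig_smul_one (hA : A.IsHermitian) :
    (A - (minEig A : ℂ) • 1).PosSemidef := by
  have hle : algebraMap ℝ (Matrix n n ℂ) (minEig A) ≤ A := by
    rw [algebraMap_le_iff_le_spectrum hA.isSelfAdjoint]
    intro μ hμ
    rw [minEig, setOf_eigenvalue_eq_spectrum]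
    exact csInf_le finite_real_spectrum.bddBelow hμ
  simpa [le_iff, Algebra.algebraMap_eq_smul_one] using hle

theorem star_dotProduct_sub_smul_one_mulVec {v : n → ℂ} (hv : star v ⬝ᵥ v = 1) (c : ℂ) :
    star v ⬝ᵥ (A - c • 1) *ᵥ v = star v ⬝ᵥ A *ᵥ v - c := by
  rw [sub_mulVec, smul_mulVec, one_mulVec, dotProduct_sub, dotProduct_smul, hv, smul_eq_mul,
    mul_one]

theorem IsHermitian.minEig_le_re_dotProduct_mulVec (hA : A.IsHermitian) {v : n → ℂ}
    (hv : star v ⬝ᵥ v = 1) : minEig A ≤ (star v ⬝ᵥ A *ᵥ v).re := by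
  have := hA.posSemidef_sub_minEig_smul_one.dotProduct_mulVec_nonneg v
  rw [star_dotProduct_sub_smul_one_mulVec hv, sub_nonneg] at this
  exact (Complex.le_def.mp this).1

theorem IsHermitian.mulVec_eq_minEig_smul (hA : A.IsHermitian) {v : n → ℂ}
    (hv : star v ⬝ᵥ v = 1) (h : (star v ⬝ᵥ A *ᵥ v).re = minEig A) :
    A *ᵥ v = (minEig A : ℂ) • v := by
  have hpsd := hA.posSemidef_sub_minEig_smul_one
  have hzero : star v ⬝ᵥ (A - (minEig A : ℂ) • 1) *ᵥ v = 0 := by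
    have hnonneg := hpsd.dotProduct_mulVec_nonneg v
    rw [star_dotProduct_sub_smul_one_mulVec hv] at hnonneg ⊢
    apply Complex.ext
    · simp [h]
    · simpa using ((Complex.nonneg_iff.mp hnonneg).2).symm
  rw [hpsd.dotProduct_mulVec_zero_iff, sub_mulVec, smul_mulVec, one_mulVec, sub_eq_zero] at hzero
  exact hzero

end Matrix

section ProductVectors

variable {dA dB : ℕ}

theorem star_vecKron_dotProduct_vecKron (α α' : Fin dA → ℂ) (β β' : Fin dB → ℂ) :
    star (vecKron α β) ⬝ᵥ vecKron α' β' = (star α ⬝ᵥ α') * (star β ⬝ᵥ β') := by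
  simp only [dotProduct, Pi.star_apply, vecKron, Fintype.sum_prod_type, Finset.sum_mul_sum,
    star_mul']
  exact Finset.sum_congr rfl fun i _ => Finset.sum_congr rfl fun j _ => by ring

theorem vecKron_smul_smul (a b : ℂ) (α : Fin dA → ℂ) (β : Fin dB → ℂ) :
    vecKron (a • α) (b • β) = (a * b) • vecKron α β := by
  ext p
  simp only [vecKron, Pi.smul_apply, smul_eq_mul]
  ring

theorem continuous_vecKron :
    Continuous fun p : (Fin dA → ℂ) × (Fin dB → ℂ) => vecKron p.1 p.2 :=
  continuous_pi fun _ => by unfold vecKron; fun_prop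

theorem EuclideanSpace.star_dotProduct_self {ι : Type*} [Fintype ι] (x : EuclideanSpace ℂ ι) :
    star x.ofLp ⬝ᵥ x.ofLp = (‖x‖ : ℂ) ^ 2 := by
  rw [dotProduct_comm, ← EuclideanSpace.inner_eq_star_dotProduct, inner_self_eq_norm_sq_to_K]
  rfl

theorem exists_norm_eq_one_vecKron_eq {α : Fin dA → ℂ} {β : Fin dB → ℂ}
    (h : star (vecKron α β) ⬝ᵥ vecKron α β = 1) :
    ∃ (x : EuclideanSpace ℂ (Fin dA)) (y : EuclideanSpace ℂ (Fin dB)),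
      ‖x‖ = 1 ∧ ‖y‖ = 1 ∧ vecKron x.ofLp y.ofLp = vecKron α β := by
  set x := WithLp.toLp 2 α
  set y := WithLp.toLp 2 β
  have hxy : ‖x‖ * ‖y‖ = 1 := by
    have hsq : ((‖x‖ * ‖y‖ : ℝ) : ℂ) ^ 2 = 1 := by
      rw [Complex.ofReal_mul, mul_pow, ← EuclideanSpace.star_dotProduct_self,
        ← EuclideanSpace.star_dotProduct_self, ← star_vecKron_dotProduct_vecKron]
      exact h
    exact (pow_eq_one_iff_of_nonneg (by positivity) two_ne_zero).mp (by exact_mod_cast hsq)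
  have hx : (‖x‖ : ℂ) ≠ 0 := Complex.ofReal_ne_zero.mpr (left_ne_zero_of_mul_eq_one hxy)
  refine ⟨(‖x‖ : ℂ)⁻¹ • x, (‖x‖ : ℂ) • y, ?_, ?_, ?_⟩
  · rw [norm_smul, norm_inv, Complex.norm_real, norm_norm,
      inv_mul_cancel₀ (Complex.ofReal_ne_zero.mp hx)]
  · rwa [norm_smul, Complex.norm_real, norm_norm]
  · rw [WithLp.ofLp_smul, WithLp.ofLp_smul, vecKron_smul_smul, inv_mul_cancel₀ hx, one_smul]

theorem exists_vecKron_attaining_prodMin (hdA : 1 ≤ dA) (hdB : 1 ≤ dB)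
    (H : Matrix (Fin dA × Fin dB) (Fin dA × Fin dB) ℂ) :
    ∃ (α : Fin dA → ℂ) (β : Fin dB → ℂ), star (vecKron α β) ⬝ᵥ vecKron α β = 1 ∧
      (star (vecKron α β) ⬝ᵥ H *ᵥ vecKron α β).re = prodMin H := by
  have : NeZero dA := ⟨by omega⟩
  have : NeZero dB := ⟨by omega⟩
  let g (p : EuclideanSpace ℂ (Fin dA) × EuclideanSpace ℂ (Fin dB)) : ℝ :=
    (star (vecKron p.1.ofLp p.2.ofLp) ⬝ᵥ H *ᵥ vecKron p.1.ofLp p.2.ofLp).re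
  have hg : Continuous g := by
    have := continuous_vecKron (dA := dA) (dB := dB)
    fun_prop
  let K := Metric.sphere (0 : EuclideanSpace ℂ (Fin dA)) 1 ×ˢ
    Metric.sphere (0 : EuclideanSpace ℂ (Fin dB)) 1
  have hK : IsCompact K := (isCompact_sphere _ _).prod (isCompact_sphere _ _)
  have hKne : K.Nonempty :=
    (NormedSpace.sphere_nonempty.mpr zero_le_one).prod
      (NormedSpace.sphere_nonempty.mpr zero_le_one)
  have hS : {r : ℝ | ∃ (α : Fin dA → ℂ) (β : Fin dB → ℂ),
      star (vecKron α β) ⬝ᵥ vecKron α β = 1 ∧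
      (star (vecKron α β) ⬝ᵥ H *ᵥ vecKron α β).re = r} = g '' K := by
    ext r
    constructor
    · rintro ⟨α, β, hunit, rfl⟩
      obtain ⟨x, y, hx, hy, hxy⟩ := exists_norm_eq_one_vecKron_eq hunit
      refine ⟨(x, y), ⟨mem_sphere_zero_iff_norm.mpr hx, mem_sphere_zero_iff_norm.mpr hy⟩, ?_⟩
      simp only [g, hxy]
    · rintro ⟨⟨x, y⟩, ⟨hx, hy⟩, rfl⟩
      refine ⟨x.ofLp, y.ofLp, ?_, rfl⟩
      rw [mem_sphere_zero_iff_norm] at hx hy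
      rw [star_vecKron_dotProduct_vecKron, EuclideanSpace.star_dotProduct_self,
        EuclideanSpace.star_dotProduct_self, hx, hy]
      norm_num
  have hmin := (hK.image hg).sInf_mem (hKne.image g)
  rw [← hS] at hmin
  exact hmin

end ProductVectors

/-- If no product unit vector is an eigenvector of the Hermitian matrix `H`
for its least eigenvalue, then `λ_min(H) < λ⊗_min(H)`. -/
theorem stmt7 {dA dB : ℕ} (hdA : 1 ≤ dA) (hdB : 1 ≤ dB)
    (H : Matrix (Fin dA × Fin dB) (Fin dA × Fin dB) ℂ) (hH : H.IsHermitian)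
    (h : ¬ ∃ (α : Fin dA → ℂ) (β : Fin dB → ℂ),
      star (vecKron α β) ⬝ᵥ vecKron α β = 1 ∧
      H.mulVec (vecKron α β) = (↑(minEig H) : ℂ) • vecKron α β) :
    minEig H < prodMin H := by
  obtain ⟨α, β, hunit, hmin⟩ := exists_vecKron_attaining_prodMin hdA hdB H
  rw [← hmin]
  refine (hH.minEig_le_re_dotProduct_mulVec hunit).lt_of_ne fun heq => ?_
  exact h ⟨α, β, hunit, hH.mulVec_eq_minEig_smul hunit heq.symm⟩
end
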